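/- arXiv:2602.18982 — 2 statements merged into one kernel-verified Lean document; each statement's English description precedes it below -/
import Mathlib

section
/- Let R and S be row-stochastic matrices indexed by a finite set S, and let x ∈ S be such that the rows R_{x,·} and S_{x,·} coincide. For t ≥ 0 and λ > 0, define P = ∑_{n≥0} e^{-λt}(λt)ⁿ/n! · Rⁿ and P' = ∑_{n≥0} e^{-λt}(λt)ⁿ/n! · Sⁿ. Then the ℓ¹ distance between the x-th rows satisfies ‖P_{x,·} - P'_{x,·}‖₁ ≤ 2(1 - e^{-λt}(1+λt)) ≤ (λt)². -/
/-!
Since the rows of `R` and `S'` at `x` agree, so do the rows of `Rⁿ` and `S'ⁿ` for `n ≤ 1`, while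
for `n ≥ 2` two probability rows are at ℓ¹ distance at most `2`. Hence the ℓ¹ distance of the
rows of the two series is at most twice the Poisson tail `ℙ(N ≥ 2) = 1 - e^{-s}(1+s)`, `s = λt`,
which is at most `𝔼[N(N-1)]/2 = s²/2`.
-/

open Matrix

noncomputable def poissonWeight (s : ℝ) (n : ℕ) : ℝ := Real.exp (-s) * s ^ n / n.factorial

section PoissonWeight

variable {s : ℝ}

lemma poissonWeight_nonneg (hs : 0 ≤ s) (n : ℕ) : 0 ≤ poissonWeight s n := by
  unfold poissonWeight
  positivity

lemma hasSum_poissonWeight (hs : 0 ≤ s) : HasSum (poissonWeight s) 1 :=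
  ProbabilityTheory.hasSum_one_poissonMeasure ⟨s, hs⟩

lemma summable_poissonWeight (hs : 0 ≤ s) : Summable (poissonWeight s) :=
  (hasSum_poissonWeight hs).summable

lemma tsum_poissonWeight_add_two (hs : 0 ≤ s) :
    ∑' n, poissonWeight s (n + 2) = 1 - Real.exp (-s) * (1 + s) := by
  have hsplit := (summable_poissonWeight hs).sum_add_tsum_nat_add 2
  rw [(hasSum_poissonWeight hs).tsum_eq, Finset.sum_range_succ, Finset.sum_range_one] at hsplit
  have h0 : poissonWeight s 0 = Real.exp (-s) := by simp [poissonWeight]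
  have h1 : poissonWeight s 1 = Real.exp (-s) * s := by simp [poissonWeight]
  linarith

lemma poissonWeight_add_two_le (hs : 0 ≤ s) (n : ℕ) :
    poissonWeight s (n + 2) ≤ s ^ 2 / 2 * poissonWeight s n := by
  have hfac : (2 * n.factorial : ℝ) ≤ (n + 2).factorial := by
    have : 2 * n.factorial ≤ (n + 2).factorial := by
      rw [Nat.factorial_succ, Nat.factorial_succ, ← mul_assoc]
      exact Nat.mul_le_mul_right _ (by nlinarith)
    exact_mod_cast this
  calc poissonWeight s (n + 2) ≤ Real.exp (-s) * s ^ (n + 2) / (2 * n.factorial) := by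
        unfold poissonWeight
        gcongr
    _ = s ^ 2 / 2 * poissonWeight s n := by
        unfold poissonWeight
        field_simp
        ring

lemma tsum_poissonWeight_add_two_le (hs : 0 ≤ s) :
    ∑' n, poissonWeight s (n + 2) ≤ s ^ 2 / 2 := by
  have hsum := summable_poissonWeight hs
  calc ∑' n, poissonWeight s (n + 2) ≤ ∑' n, s ^ 2 / 2 * poissonWeight s n :=
        Summable.tsum_le_tsum (poissonWeight_add_two_le hs) ((summable_nat_add_iff 2).2 hsum)
          (hsum.mul_left _)
    _ = s ^ 2 / 2 := by rw [hsum.tsum_mul_left, (hasSum_poissonWeight hs).tsum_eq, mul_one]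

end PoissonWeight

lemma sum_abs_tsum_le_tsum_sum_abs {ι β : Type*} [Fintype ι] {f : β → ι → ℝ}
    (hf : ∀ i, Summable fun n => |f n i|) :
    ∑ i, |∑' n, f n i| ≤ ∑' n, ∑ i, |f n i| := by
  rw [Summable.tsum_finsetSum fun i _ => hf i]
  refine Finset.sum_le_sum fun i _ => ?_
  simp only [← Real.norm_eq_abs] at hf ⊢
  exact norm_tsum_le_tsum_norm (hf i)

section RowStochastic

variable {S : Type*} [Fintype S] [DecidableEq S] {A B : Matrix S S ℝ}

lemma summable_mul_pow_apply (hA : A ∈ rowStochastic ℝ S) {c : ℕ → ℝ} (hc : Summable c)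
    (a b : S) : Summable fun n => c n * (A ^ n) a b := by
  refine hc.abs.of_norm_bounded fun n => ?_
  have hA_n := pow_mem hA n
  rw [Real.norm_eq_abs, abs_mul, abs_of_nonneg (nonneg_of_mem_rowStochastic hA_n)]
  exact mul_le_of_le_one_right (abs_nonneg _) (le_one_of_mem_rowStochastic hA_n)

lemma tsum_smul_pow_apply (hA : A ∈ rowStochastic ℝ S) {c : ℕ → ℝ} (hc : Summable c)
    (a b : S) : (∑' n, c n • A ^ n) a b = ∑' n, c n * (A ^ n) a b := by
  have hrow : ∀ a, Summable fun n => (c n • A ^ n) a :=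
    fun a => Pi.summable.2 fun b => summable_mul_pow_apply hA hc a b
  exact (congrFun (tsum_apply (Pi.summable.2 hrow)) b).trans (tsum_apply (hrow a))

lemma sum_abs_pow_apply_sub_le_two (hA : A ∈ rowStochastic ℝ S) (hB : B ∈ rowStochastic ℝ S)
    (n : ℕ) (x : S) : ∑ y, |(A ^ n) x y - (B ^ n) x y| ≤ 2 := by
  have hA_n := pow_mem hA n
  have hB_n := pow_mem hB n
  calc ∑ y, |(A ^ n) x y - (B ^ n) x y| ≤ ∑ y, ((A ^ n) x y + (B ^ n) x y) :=
        Finset.sum_le_sum fun y _ => (abs_sub _ _).trans_eq <| by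
          rw [abs_of_nonneg (nonneg_of_mem_rowStochastic hA_n),
            abs_of_nonneg (nonneg_of_mem_rowStochastic hB_n)]
    _ = 2 := by
        rw [Finset.sum_add_distrib, sum_row_of_mem_rowStochastic hA_n,
          sum_row_of_mem_rowStochastic hB_n]
        norm_num

lemma sum_abs_tsum_smul_pow_apply_sub_le (hA : A ∈ rowStochastic ℝ S)
    (hB : B ∈ rowStochastic ℝ S) {c : ℕ → ℝ} (hc0 : ∀ n, 0 ≤ c n) (hc : Summable c) {x : S}
    (hrow : ∀ y, A x y = B x y) :
    ∑ y, |(∑' n, c n • A ^ n) x y - (∑' n, c n • B ^ n) x y| ≤ 2 * ∑' n, c (n + 2) := by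
  set D : ℕ → ℝ := fun n => ∑ y, |(A ^ n) x y - (B ^ n) x y|
  have hD_le : ∀ n, D n ≤ 2 := fun n => sum_abs_pow_apply_sub_le_two hA hB n x
  have hD0 : D 0 = 0 := by simp [D]
  have hD1 : D 1 = 0 := by simp [D, hrow]
  have hdiff : ∀ y, (∑' n, c n • A ^ n) x y - (∑' n, c n • B ^ n) x y =
      ∑' n, c n * ((A ^ n) x y - (B ^ n) x y) := fun y => by
    simp only [tsum_smul_pow_apply hA hc, tsum_smul_pow_apply hB hc, mul_sub]
    exact ((summable_mul_pow_apply hA hc x y).tsum_sub (summable_mul_pow_apply hB hc x y)).symm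
  have habs : ∀ y, Summable fun n => |c n * ((A ^ n) x y - (B ^ n) x y)| := fun y => by
    simpa only [mul_sub] using
      ((summable_mul_pow_apply hA hc x y).sub (summable_mul_pow_apply hB hc x y)).abs
  have hcD : Summable fun n => c n * D n :=
    (hc.mul_left 2).of_nonneg_of_le
      (fun n => mul_nonneg (hc0 n) (Finset.sum_nonneg fun _ _ => abs_nonneg _))
      (fun n => by rw [mul_comm 2]; exact mul_le_mul_of_nonneg_left (hD_le n) (hc0 n))
  calc ∑ y, |(∑' n, c n • A ^ n) x y - (∑' n, c n • B ^ n) x y|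
      ≤ ∑' n, ∑ y, |c n * ((A ^ n) x y - (B ^ n) x y)| := by
        simp only [hdiff]
        exact sum_abs_tsum_le_tsum_sum_abs habs
    _ = ∑' n, c n * D n := by
        simp only [abs_mul, abs_of_nonneg (hc0 _), ← Finset.mul_sum, D]
    _ = ∑' n, c (n + 2) * D (n + 2) := by
        rw [← hcD.sum_add_tsum_nat_add 2]
        simp [Finset.sum_range_succ, hD0, hD1]
    _ ≤ ∑' n, 2 * c (n + 2) :=
        Summable.tsum_le_tsum
          (fun n => by rw [mul_comm 2]; exact mul_le_mul_of_nonneg_left (hD_le _) (hc0 _))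
          ((summable_nat_add_iff 2).2 hcD) (((summable_nat_add_iff 2).2 hc).mul_left 2)
    _ = 2 * ∑' n, c (n + 2) := tsum_mul_left

end RowStochastic

/-- If `R` and `S'` are row-stochastic matrices that agree on row `x`, then the `x`-rows of the
Poisson-weighted (uniformization) series `∑ₙ e^{-λt}(λt)ⁿ/n! · Rⁿ` and the corresponding series
for `S'` differ in ℓ¹ norm by at most `2(1 - e^{-λt}(1+λt)) ≤ (λt)²`. -/
theorem uniformization_row_error_bound {S : Type*} [Fintype S] [DecidableEq S]
    (R S' : Matrix S S ℝ)
    (hR0 : ∀ x y, 0 ≤ R x y) (hR1 : ∀ x, ∑ y, R x y = 1)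
    (hS0 : ∀ x y, 0 ≤ S' x y) (hS1 : ∀ x, ∑ y, S' x y = 1)
    (x : S) (hrow : ∀ y, R x y = S' x y)
    (t l : ℝ) (ht : 0 ≤ t) (hl : 0 < l)
    (P P' : Matrix S S ℝ)
    (hP : P = ∑' n : ℕ, (Real.exp (-(l * t)) * (l * t) ^ n / n.factorial) • R ^ n)
    (hP' : P' = ∑' n : ℕ, (Real.exp (-(l * t)) * (l * t) ^ n / n.factorial) • S' ^ n) :
    (∑ y, |P x y - P' x y| ≤ 2 * (1 - Real.exp (-(l * t)) * (1 + l * t))) ∧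
      2 * (1 - Real.exp (-(l * t)) * (1 + l * t)) ≤ (l * t) ^ 2 := by
  have hs : 0 ≤ l * t := mul_nonneg hl.le ht
  have hR : R ∈ rowStochastic ℝ S := mem_rowStochastic_iff_sum.2 ⟨hR0, hR1⟩
  have hS : S' ∈ rowStochastic ℝ S := mem_rowStochastic_iff_sum.2 ⟨hS0, hS1⟩
  have htail := tsum_poissonWeight_add_two hs
  refine ⟨?_, ?_⟩
  · subst hP hP'
    rw [← htail]
    exact sum_abs_tsum_smul_pow_apply_sub_le hR hS (poissonWeight_nonneg hs)
      (summable_poissonWeight hs) hrow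
  · linarith [tsum_poissonWeight_add_two_le hs]
end

section
/- Let s be a nonzero real number and N > 1 a real number. Define P_fix(s) = (1 - e^{-2s})/(1 - e^{-2Ns}), extended continuously by P_fix(0) = 1/N. Then P_fix is strictly monotonically increasing in s. -/
/-!
Put `x = e^{-2s}`, which is strictly decreasing in `s`. Then `1 / P_fix(s) = (x^N - 1) / (x - 1)`
is the slope of the secant of `x ↦ x^N` between `1` and `x`, and the value `1 / P_fix(0) = N` is
the tangent slope at `1`. Since `x ↦ x^N` is strictly convex on `[0, ∞)` for `N > 1`, this slope is
strictly increasing in `x`, and it is `1` at `x = 0`, so positive for `x > 0`.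
-/

open Real Set Function

theorem StrictConvexOn.strictMonoOn_update_slope {S : Set ℝ} {f : ℝ → ℝ} {a f' : ℝ}
    (hf : StrictConvexOn ℝ S f) (ha : a ∈ S) (hfa : HasDerivAt f f' a) :
    StrictMonoOn (update (slope f a) a f') S := by
  intro x hx y hy hxy
  rcases eq_or_ne x a with rfl | hxa
  · rw [update_self, update_of_ne hxy.ne']
    exact hf.lt_slope_of_hasDerivAt hx hy hxy hfa
  rcases eq_or_ne y a with rfl | hya
  · rw [update_self, update_of_ne hxa, slope_comm]
    exact hf.slope_lt_of_hasDerivAt hx hy hxy hfa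
  rw [update_of_ne hxa, update_of_ne hya, slope_def_field, slope_def_field]
  exact hf.secant_strict_mono ha hx hy hxa hya hxy

theorem strictMonoOn_update_slope_rpow_one {p : ℝ} (hp : 1 < p) :
    StrictMonoOn (update (slope (fun x : ℝ => x ^ p) 1) 1 p) (Ici 0) := by
  have hderiv : HasDerivAt (fun x : ℝ => x ^ p) p 1 := by
    simpa using hasDerivAt_rpow_const (x := 1) (p := p) (Or.inl one_ne_zero)
  exact (strictConvexOn_rpow hp).strictMonoOn_update_slope (by simp) hderiv

theorem one_lt_update_slope_rpow_one {p x : ℝ} (hp : 1 < p) (hx : 0 < x) :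
    1 < update (slope (fun x : ℝ => x ^ p) 1) 1 p x := by
  have hzero : update (slope (fun x : ℝ => x ^ p) 1) 1 p 0 = 1 := by
    rw [update_of_ne zero_ne_one, slope_def_field, zero_rpow (by linarith)]
    norm_num
  calc 1 = _ := hzero.symm
    _ < _ := strictMonoOn_update_slope_rpow_one hp (mem_Ici.2 le_rfl) hx.le hx

theorem fixation_probability_eq_inv_update_slope (N s : ℝ) :
    (if s = 0 then 1 / N else (1 - exp (-2 * s)) / (1 - exp (-2 * N * s))) =
      (update (slope (fun x : ℝ => x ^ N) 1) 1 N (exp (-2 * s)))⁻¹ := by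
  rcases eq_or_ne s 0 with rfl | hs
  · simp
  have hx : exp (-2 * s) ≠ 1 := by simpa using hs
  have hpow : exp (-2 * s) ^ N = exp (-2 * N * s) := by rw [← exp_mul]; ring_nf
  rw [if_neg hs, update_of_ne hx, slope_def_field, hpow, inv_div, ← neg_div_neg_eq]
  simp only [neg_sub, one_rpow]

/-- Kimura's fixation probability `P_fix(s) = (1 - e^{-2s})/(1 - e^{-2Ns})`, extended
continuously by `P_fix(0) = 1/N`, is strictly increasing in the selective advantage `s`. -/
theorem fixation_probability_strictMono (N : ℝ) (hN : 1 < N) :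
    StrictMono (fun s : ℝ =>
      if s = 0 then 1 / N
      else (1 - Real.exp (-2 * s)) / (1 - Real.exp (-2 * N * s))) := by
  intro s t hst
  simp only [fixation_probability_eq_inv_update_slope]
  have hexp : exp (-2 * t) < exp (-2 * s) := exp_lt_exp.2 (by linarith)
  exact inv_strictAnti₀ (zero_lt_one.trans (one_lt_update_slope_rpow_one hN (exp_pos _)))
    (strictMonoOn_update_slope_rpow_one hN (exp_pos _).le (exp_pos _).le hexp)
end
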